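/- Let n ≥ 3 and let A be a set of 2n positive integers. If A has exactly (1/2)·binomial(2n, n) divisors of size n, then A is an n-anti-pencil. -/

import Mathlib

/-- `A` is a `k`-anti-pencil: the `k`-element divisors of `A` are precisely the `k`-element
subsets of `A \ {max A}`. -/
def IsKAntiPencil (k : ℕ) (A : Finset ℕ) : Prop :=
  ∃ M ∈ A, (∀ x ∈ A, x ≤ M) ∧
    ∀ B : Finset ℕ, (B ⊆ A ∧ B.card = k ∧ B.sum id ∣ A.sum id) ↔
      (B ⊆ A.erase M ∧ B.card = k)

open Finset

/-!
Call an `n`-subset of `A` low, half or high according as twice its sum is less than, equal to or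
greater than `∑ A`. Complementation exchanges low and high sets and no high set is a divisor, so
the hypothesis says precisely that there are twice as many half sets as low non-divisors.

Exchanging an element `u` of a half set `H` for a smaller `v ∉ H` gives a low set. For `H` and its
complement together, at least `n` of these exchanges give non-divisors, whereas a low set arises
from at most `n - 1` exchanges (from `n` of them, its complement would be a translate of it, which
forces `n = 2`). Double counting leaves no half sets and no low non-divisors: every low `n`-set
divides `∑ A`, so its sum is at most `∑ A / 3`, and no `n`-set has its sum strictly between
`∑ A / 3` and `2 ∑ A / 3`.

If an `n`-set containing `max A` were low, then `max A ≤ ∑ A / 3`. Exchanging its elements one by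
one for those of its complement changes the sum by less than `max A` at each step, so the sum
cannot cross that gap, yet the complement has sum at least `2 ∑ A / 3`. Hence the `n`-sets
containing `max A` are high and the others are low, which is the anti-pencil property.
-/

lemma succ_mul_le_of_dvd {t S k : ℕ} (hdvd : t ∣ S) (hlt : k * t < S) : (k + 1) * t ≤ S := by
  obtain ⟨m, rfl⟩ := hdvd
  have hkm : k < m := Nat.lt_of_mul_lt_mul_left (by rwa [mul_comm] at hlt)
  calc (k + 1) * t ≤ m * t := Nat.mul_le_mul_right t hkm
    _ = t * m := mul_comm m t

lemma sum_insert_erase_add {H : Finset ℕ} {u v : ℕ} (hu : u ∈ H) (hv : v ∉ H) :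
    (insert v (H.erase u)).sum id + u = H.sum id + v := by
  rw [sum_insert fun h => hv (mem_of_mem_erase h), ← sum_erase_add H id hu, id, id]
  omega

lemma sum_id_sdiff_add {A B : Finset ℕ} (h : B ⊆ A) : (A \ B).sum id + B.sum id = A.sum id :=
  sum_sdiff h

section Subsets

variable {A B : Finset ℕ} {n : ℕ}

def lowSets (A : Finset ℕ) (n : ℕ) : Finset (Finset ℕ) :=
  (A.powersetCard n).filter (fun B => 2 * B.sum id < A.sum id)

def halfSets (A : Finset ℕ) (n : ℕ) : Finset (Finset ℕ) :=
  (A.powersetCard n).filter (fun B => 2 * B.sum id = A.sum id)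

def highSets (A : Finset ℕ) (n : ℕ) : Finset (Finset ℕ) :=
  (A.powersetCard n).filter (fun B => A.sum id < 2 * B.sum id)

def lowNondivisors (A : Finset ℕ) (n : ℕ) : Finset (Finset ℕ) :=
  (lowSets A n).filter (fun B => ¬ B.sum id ∣ A.sum id)

lemma sdiff_mem_powersetCard (hA : A.card = 2 * n) (hB : B ∈ A.powersetCard n) :
    A \ B ∈ A.powersetCard n := by
  rw [mem_powersetCard] at hB ⊢
  exact ⟨sdiff_subset, by rw [card_sdiff_of_subset hB.1, hA, hB.2]; omega⟩

lemma sdiff_mem_halfSets (hA : A.card = 2 * n) (hB : B ∈ halfSets A n) :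
    A \ B ∈ halfSets A n := by
  rw [halfSets, mem_filter] at hB ⊢
  have hsum := sum_id_sdiff_add (mem_powersetCard.1 hB.1).1
  exact ⟨sdiff_mem_powersetCard hA hB.1, by omega⟩

lemma sum_lt_sum_of_mem_powersetCard (hA : A.card = 2 * n) (hn : 0 < n)
    (hpos : ∀ a ∈ A, 0 < a) (hB : B ∈ A.powersetCard n) : B.sum id < A.sum id := by
  obtain ⟨hBA, hBcard⟩ := mem_powersetCard.1 hB
  obtain ⟨a, ha⟩ : (A \ B).Nonempty := by rw [← card_pos, card_sdiff_of_subset hBA]; omega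
  obtain ⟨haA, haB⟩ := mem_sdiff.1 ha
  exact sum_lt_sum_of_subset hBA haA haB (hpos a haA) fun _ _ _ => Nat.zero_le _

lemma two_mul_sum_le_of_dvd (hA : A.card = 2 * n) (hn : 0 < n) (hpos : ∀ a ∈ A, 0 < a)
    (hB : B ∈ A.powersetCard n) (hdvd : B.sum id ∣ A.sum id) : 2 * B.sum id ≤ A.sum id :=
  succ_mul_le_of_dvd hdvd (by rw [one_mul]; exact sum_lt_sum_of_mem_powersetCard hA hn hpos hB)

lemma card_highSets_eq_card_lowSets (hA : A.card = 2 * n) :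
    (highSets A n).card = (lowSets A n).card := by
  refine card_nbij' (A \ ·) (A \ ·) ?_ ?_ ?_ ?_
  all_goals intro B hB; simp only [highSets, lowSets, mem_coe, mem_filter] at hB ⊢
  all_goals have hsum := sum_id_sdiff_add (mem_powersetCard.1 hB.1).1
  · exact ⟨sdiff_mem_powersetCard hA hB.1, by omega⟩
  · exact ⟨sdiff_mem_powersetCard hA hB.1, by omega⟩
  · exact Finset.sdiff_sdiff_eq_self (mem_powersetCard.1 hB.1).1
  · exact Finset.sdiff_sdiff_eq_self (mem_powersetCard.1 hB.1).1

lemma card_powersetCard_eq_two_mul_card_lowSets_add (hA : A.card = 2 * n) :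
    (A.powersetCard n).card = 2 * (lowSets A n).card + (halfSets A n).card := by
  rw [two_mul]
  nth_rw 2 [← card_highSets_eq_card_lowSets hA]
  rw [lowSets, halfSets, highSets, card_filter, card_filter, card_filter, card_eq_sum_ones,
    ← sum_add_distrib, ← sum_add_distrib]
  refine sum_congr rfl fun B _ => ?_
  split_ifs <;> omega

lemma card_divisors_add_card_lowNondivisors (hA : A.card = 2 * n) (hn : 0 < n)
    (hpos : ∀ a ∈ A, 0 < a) :
    ((A.powersetCard n).filter (fun B => B.sum id ∣ A.sum id)).card + (lowNondivisors A n).card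
      = (halfSets A n).card + (lowSets A n).card := by
  rw [lowNondivisors, lowSets, filter_filter, halfSets, card_filter, card_filter, card_filter,
    card_filter, ← sum_add_distrib, ← sum_add_distrib]
  refine sum_congr rfl fun B hB => ?_
  have hle := two_mul_sum_le_of_dvd hA hn hpos hB
  by_cases hdvd : B.sum id ∣ A.sum id
  · have := hle hdvd
    split_ifs <;> omega
  · have hne : 2 * B.sum id ≠ A.sum id := fun h => hdvd ⟨2, by omega⟩
    split_ifs <;> omega

lemma card_halfSets_eq_two_mul_card_lowNondivisors (hA : A.card = 2 * n) (hn : 0 < n)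
    (hpos : ∀ a ∈ A, 0 < a)
    (hnum : 2 * ((A.powersetCard n).filter (fun B => B.sum id ∣ A.sum id)).card
      = (2 * n).choose n) :
    (halfSets A n).card = 2 * (lowNondivisors A n).card := by
  have htotal := card_powersetCard_eq_two_mul_card_lowSets_add hA
  rw [card_powersetCard, hA] at htotal
  have := card_divisors_add_card_lowNondivisors hA hn hpos
  omega

end Subsets

section GoodPairs

/-- Let `X, Y` partition `A` into two halves of sum `σ`. Exchanging `x ∈ X` and `y ∈ Y`, so that
the larger of the two leaves its half, produces an `n`-set of sum `σ + min x y - max x y`; the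
pair is good when this set is not a divisor of `A`, whose sum is `2 * σ`. -/
def IsGoodPair (σ : ℕ) (p : ℕ × ℕ) : Prop :=
  ¬ (σ + min p.1 p.2 - max p.1 p.2) ∣ 2 * σ

instance (σ : ℕ) : DecidablePred (IsGoodPair σ) := fun _ => inferInstanceAs (Decidable (¬ _))

variable {σ x y : ℕ} {X Y : Finset ℕ}

lemma isGoodPair_swap {p : ℕ × ℕ} : IsGoodPair σ p.swap ↔ IsGoodPair σ p := by
  simp only [IsGoodPair, Prod.fst_swap, Prod.snd_swap, min_comm, max_comm]

lemma isGoodPair_of_lt (hxy : x ≠ y) (h2 : 2 * max x y < σ + 2 * min x y)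
    (h3 : 3 * max x y ≠ σ + 3 * min x y) : IsGoodPair σ (x, y) := by
  intro hdvd
  have := succ_mul_le_of_dvd hdvd (k := 2) (by omega)
  have := succ_mul_le_of_dvd hdvd (k := 3) (by omega)
  omega

def goodSwaps (σ : ℕ) (X Y : Finset ℕ) : Finset (ℕ × ℕ) :=
  (X ×ˢ Y).filter (fun p => p.2 < p.1 ∧ IsGoodPair σ p)

lemma card_filter_isGoodPair_comm :
    ((Y ×ˢ X).filter (IsGoodPair σ)).card = ((X ×ˢ Y).filter (IsGoodPair σ)).card := by
  refine card_nbij' Prod.swap Prod.swap ?_ ?_ (fun _ _ => rfl) (fun _ _ => rfl)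
  all_goals intro p hp; simp only [mem_coe, mem_filter, mem_product] at hp ⊢
  all_goals exact ⟨⟨hp.1.2, hp.1.1⟩, isGoodPair_swap.2 hp.2⟩

lemma card_filter_isGoodPair_le (hXY : Disjoint X Y) :
    ((X ×ˢ Y).filter (IsGoodPair σ)).card
      ≤ (goodSwaps σ X Y).card + (goodSwaps σ Y X).card := by
  refine (card_le_card_of_injOn (fun p => if p.2 < p.1 then p else p.swap) ?_ ?_).trans
    (card_union_le _ _)
  · rintro ⟨x, y⟩ hp
    simp only [mem_coe, mem_filter, mem_product] at hp
    obtain ⟨⟨hx, hy⟩, hgood⟩ := hp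
    have hne : x ≠ y := fun h => disjoint_left.1 hXY hx (h ▸ hy)
    simp only [goodSwaps, mem_coe, mem_union, mem_filter, mem_product]
    split_ifs with h
    · exact Or.inl ⟨⟨hx, hy⟩, h, hgood⟩
    · exact Or.inr ⟨⟨hy, hx⟩, by simp only [Prod.fst_swap, Prod.snd_swap]; omega,
        isGoodPair_swap.2 hgood⟩
  · rintro ⟨x, y⟩ hp ⟨x', y'⟩ hq hpq
    simp only [mem_coe, mem_filter, mem_product] at hp hq
    have hXY' := disjoint_left.1 hXY
    dsimp only at hpq
    split_ifs at hpq <;> simp only [Prod.swap_prod_mk, Prod.mk.injEq] at hpq ⊢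
    · exact hpq
    · exact absurd (hpq.1 ▸ hq.1.2) (hXY' hp.1.1)
    · exact absurd (hpq.1 ▸ hp.1.2) (hXY' hq.1.1)
    · exact hpq.symm

lemma card_le_card_filter_add_two (hX : X.sum id = σ) :
    X.card ≤ (X.filter (fun x => 3 * x < σ)).card + 2 := by
  have hbig : (X.filter (fun x => ¬ 3 * x < σ)).card ≤ 2 := by
    by_contra! h
    obtain ⟨a, ha, b, hb, c, hc, hab, hac, hbc⟩ := two_lt_card.1 h
    simp only [mem_filter] at ha hb hc
    have hsub : ({a, b, c} : Finset ℕ) ⊆ X := by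
      simp only [insert_subset_iff, singleton_subset_iff]; exact ⟨ha.1, hb.1, hc.1⟩
    have := sum_le_sum_of_subset (f := id) hsub
    rw [sum_insert (by simp [hab, hac]), sum_insert (by simp [hbc]), sum_singleton, hX] at this
    simp only [id] at this
    omega
  have := card_filter_add_card_filter_not (s := X) (fun x => 3 * x < σ)
  omega

lemma exists_lt_lt_of_card_eq_three (hX : X.card = 3) :
    ∃ a b c, a < b ∧ b < c ∧ X = {a, b, c} := by
  obtain ⟨x, y, z, hxy, hxz, hyz, rfl⟩ := card_eq_three.1 hX
  refine ⟨min x (min y z), x + y + z - min x (min y z) - max x (max y z), max x (max y z),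
    by omega, by omega, ?_⟩
  ext w
  simp only [mem_insert, mem_singleton]
  omega

lemma sum_eq_of_lt_lt {a b c : ℕ} (hab : a < b) (hbc : b < c) :
    ({a, b, c} : Finset ℕ).sum id = a + b + c := by
  rw [sum_insert (by simp; omega), sum_insert (by simp; omega), sum_singleton, id, id, id,
    add_assoc]

lemma three_le_card_filter_isGoodPair_of_sorted {a b c p q r : ℕ} (hab : a < b) (hbc : b < c)
    (hpq : p < q) (hqr : q < r) (hX : a + b + c = σ) (hY : p + q + r = σ)
    (hdisj : Disjoint ({a, b, c} : Finset ℕ) {p, q, r}) (hb : σ ≤ 3 * b) :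
    3 ≤ ((({a, b, c} : Finset ℕ) ×ˢ {p, q, r}).filter (IsGoodPair σ)).card := by
  simp only [disjoint_insert_left, disjoint_insert_right, disjoint_singleton, mem_insert,
    mem_singleton, not_or] at hdisj
  have good : ∀ x ∈ ({a, b, c} : Finset ℕ), ∀ y ∈ ({p, q, r} : Finset ℕ), x ≠ y →
      2 * max x y < σ + 2 * min x y → 3 * max x y ≠ σ + 3 * min x y →
      (x, y) ∈ (({a, b, c} : Finset ℕ) ×ˢ {p, q, r}).filter (IsGoodPair σ) :=
    fun x hx y hy hxy h2 h3 =>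
      mem_filter.2 ⟨mem_product.2 ⟨hx, hy⟩, isGoodPair_of_lt hxy h2 h3⟩
  refine two_lt_card.2 ?_
  rcases lt_or_ge (3 * q) σ with hq | hq
  · -- `a`, `p` and `q` are small, and `b - p`, `b - q` cannot both equal `σ / 3`
    refine ⟨(a, p), good a (by simp) p (by simp) (by omega) (by omega) (by omega),
      (a, q), good a (by simp) q (by simp) (by omega) (by omega) (by omega), ?_⟩
    by_cases hbp : 3 * b = σ + 3 * p
    · exact ⟨(b, q), good b (by simp) q (by simp) (by omega) (by omega) (by omega),
        by simp; omega, by simp; omega, by simp; omega⟩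
    · exact ⟨(b, p), good b (by simp) p (by simp) (by omega) (by omega) (by omega),
        by simp; omega, by simp; omega, by simp; omega⟩
  · -- if `b - p = q - a = σ / 3` then `a + b = p + q`, hence `c = r`
    refine ⟨(a, p), good a (by simp) p (by simp) (by omega) (by omega) (by omega),
      (b, q), good b (by simp) q (by simp) (by omega) (by omega) (by omega), ?_⟩
    by_cases hbp : 3 * b = σ + 3 * p
    · exact ⟨(a, q), good a (by simp) q (by simp) (by omega) (by omega) (by omega),
        by simp; omega, by simp; omega, by simp; omega⟩
    · exact ⟨(b, p), good b (by simp) p (by simp) (by omega) (by omega) (by omega),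
        by simp; omega, by simp; omega, by simp; omega⟩

lemma three_le_card_filter_isGoodPair (hX : X.card = 3) (hY : Y.card = 3) (hXY : Disjoint X Y)
    (hXs : X.sum id = σ) (hYs : Y.sum id = σ)
    (hsmall : (X.filter (fun x => 3 * x < σ)).card < 2) :
    3 ≤ ((X ×ˢ Y).filter (IsGoodPair σ)).card := by
  obtain ⟨a, b, c, hab, hbc, rfl⟩ := exists_lt_lt_of_card_eq_three hX
  obtain ⟨p, q, r, hpq, hqr, rfl⟩ := exists_lt_lt_of_card_eq_three hY
  rw [sum_eq_of_lt_lt hab hbc] at hXs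
  rw [sum_eq_of_lt_lt hpq hqr] at hYs
  refine three_le_card_filter_isGoodPair_of_sorted hab hbc hpq hqr hXs hYs hXY ?_
  by_contra! hb
  refine hsmall.not_ge (one_lt_card.2 ⟨a, ?_, b, ?_, hab.ne⟩) <;>
    simp only [mem_filter, mem_insert, mem_singleton, true_or, or_true, true_and] <;> omega

lemma le_card_filter_isGoodPair {n : ℕ} (hn : 3 ≤ n) (hX : X.card = n) (hY : Y.card = n)
    (hXY : Disjoint X Y) (hXs : X.sum id = σ) (hYs : Y.sum id = σ) :
    n ≤ ((X ×ˢ Y).filter (IsGoodPair σ)).card := by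
  set SX := X.filter (fun x => 3 * x < σ)
  set SY := Y.filter (fun y => 3 * y < σ)
  have hSX : n ≤ SX.card + 2 := hX ▸ card_le_card_filter_add_two hXs
  have hSY : n ≤ SY.card + 2 := hY ▸ card_le_card_filter_add_two hYs
  by_cases hsmall : 2 ≤ SX.card ∧ 2 ≤ SY.card
  · have hsub : SX ×ˢ SY ⊆ (X ×ˢ Y).filter (IsGoodPair σ) := by
      rintro ⟨x, y⟩ hxy
      simp only [SX, SY, mem_product, mem_filter] at hxy
      have hne : x ≠ y := fun h => disjoint_left.1 hXY hxy.1.1 (h ▸ hxy.2.1)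
      exact mem_filter.2 ⟨mem_product.2 ⟨hxy.1.1, hxy.2.1⟩,
        isGoodPair_of_lt hne (by omega) (by omega)⟩
    calc n ≤ SX.card * SY.card := by nlinarith
      _ = (SX ×ˢ SY).card := (card_product _ _).symm
      _ ≤ _ := card_le_card hsub
  · obtain rfl : n = 3 := by omega
    rcases Nat.lt_or_ge SX.card 2 with h | h
    · exact three_le_card_filter_isGoodPair hX hY hXY hXs hYs h
    · rw [← card_filter_isGoodPair_comm]
      exact three_le_card_filter_isGoodPair hY hX hXY.symm hYs hXs (by omega : SY.card < 2)

end GoodPairs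

section DoubleCounting

variable {A H N : Finset ℕ} {n : ℕ}

/-- The elements `v ∈ N` that can be exchanged for some `u ∉ N` so as to reach a half set. -/
def halvingSwaps (A N : Finset ℕ) : Finset ℕ :=
  N.filter (fun v => ∃ u ∈ A \ N, 2 * (N.sum id + u) = A.sum id + 2 * v)

lemma card_halvingSwaps_lt (hn : 3 ≤ n) (hA : A.card = 2 * n) (hN : N ∈ lowSets A n) :
    (halvingSwaps A N).card < n := by
  obtain ⟨hNn, hlow⟩ := mem_filter.1 hN
  obtain ⟨hNA, hNcard⟩ := mem_powersetCard.1 hNn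
  by_contra! hge
  have hall := filter_card_eq (le_antisymm (card_filter_le _ _) (hNcard ▸ hge))
  obtain ⟨v₀, hv₀⟩ : N.Nonempty := card_pos.1 (by omega)
  obtain ⟨u₀, -, hu₀⟩ := hall v₀ hv₀
  -- every element of `N` is shifted by the same `c > 0` into `A \ N`, which forces `n = 2`
  obtain ⟨c, rfl⟩ : ∃ c, u₀ = v₀ + c := ⟨u₀ - v₀, by omega⟩
  have himage : N.image (· + c) = A \ N := by
    refine eq_of_subset_of_card_le (fun w hw => ?_) ?_
    · obtain ⟨v, hv, rfl⟩ := mem_image.1 hw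
      obtain ⟨u, hu, hvu⟩ := hall v hv
      convert hu using 1
      omega
    · rw [card_image_of_injective _ (add_left_injective c), card_sdiff_of_subset hNA]
      omega
  have hshift : (A \ N).sum id = N.sum id + n * c := by
    rw [← himage, sum_image fun _ _ _ _ h => add_right_cancel h]
    simp only [id, sum_add_distrib, sum_const, smul_eq_mul, hNcard]
  have hsum := sum_id_sdiff_add hNA
  have hc : 0 < c := by omega
  have : n * c = 2 * c := by omega
  exact absurd (Nat.eq_of_mul_eq_mul_right hc this) (by omega)

lemma insert_erase_insert_erase {u v : ℕ} (hu : u ∈ H) (hv : v ∉ H) :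
    insert u ((insert v (H.erase u)).erase v) = H := by
  rw [erase_insert fun h => hv (mem_of_mem_erase h), insert_erase hu]

lemma swap_mem_lowNondivisors (hH : H ∈ halfSets A n) {p : ℕ × ℕ}
    (hp : p ∈ goodSwaps (H.sum id) H (A \ H)) :
    insert p.2 (H.erase p.1) ∈ lowNondivisors A n ∧
      p.2 ∈ halvingSwaps A (insert p.2 (H.erase p.1)) := by
  obtain ⟨hHn, hHsum⟩ := mem_filter.1 hH
  obtain ⟨hHA, hHcard⟩ := mem_powersetCard.1 hHn
  simp only [goodSwaps, mem_filter, mem_product] at hp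
  obtain ⟨⟨hu, hv⟩, hvu, hgood⟩ := hp
  obtain ⟨hvA, hvH⟩ := mem_sdiff.1 hv
  have hsum := sum_insert_erase_add hu hvH
  have hHpos := card_pos.2 ⟨_, hu⟩
  have huN : p.1 ∉ insert p.2 (H.erase p.1) := by simp [hvu.ne']
  have hNn : insert p.2 (H.erase p.1) ∈ A.powersetCard n := by
    rw [mem_powersetCard, card_insert_of_notMem fun h => hvH (mem_of_mem_erase h),
      card_erase_of_mem hu, hHcard]
    exact ⟨insert_subset hvA ((erase_subset _ _).trans hHA), by omega⟩
  refine ⟨mem_filter.2 ⟨mem_filter.2 ⟨hNn, by omega⟩, fun hdvd => hgood ?_⟩,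
    mem_filter.2 ⟨mem_insert_self _ _, p.1, mem_sdiff.2 ⟨hHA hu, huN⟩, by omega⟩⟩
  rwa [min_eq_right hvu.le, max_eq_left hvu.le, show H.sum id + p.2 - p.1 =
    (insert p.2 (H.erase p.1)).sum id by omega, hHsum]

lemma sum_card_goodSwaps_le (hn : 3 ≤ n) (hA : A.card = 2 * n) :
    ∑ H ∈ halfSets A n, (goodSwaps (H.sum id) H (A \ H)).card
      ≤ (n - 1) * (lowNondivisors A n).card := by
  rw [← card_sigma]
  calc _ ≤ ((lowNondivisors A n).sigma (halvingSwaps A)).card := by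
        refine card_le_card_of_injOn (fun x => ⟨insert x.2.2 (x.1.erase x.2.1), x.2.2⟩) ?_ ?_
        · rintro ⟨H, p⟩ hx
          rw [mem_coe, mem_sigma] at hx ⊢
          exact swap_mem_lowNondivisors hx.1 hx.2
        · -- `(N, v)` determines `u` through the sum of `N`, and then `H = insert u (N.erase v)`
          rintro ⟨H, u, v⟩ hx ⟨H', u', v'⟩ hx' h
          simp only [mem_coe, mem_sigma, goodSwaps, mem_filter, mem_product] at hx hx'
          simp only [Sigma.mk.injEq, heq_eq_eq] at h
          obtain ⟨hN, rfl⟩ := h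
          obtain ⟨hH, ⟨hu, hv⟩, -⟩ := hx
          obtain ⟨hH', ⟨hu', hv'⟩, -⟩ := hx'
          have hsum := sum_insert_erase_add hu (mem_sdiff.1 hv).2
          have hsum' := sum_insert_erase_add hu' (mem_sdiff.1 hv').2
          have hHsum := (mem_filter.1 hH).2
          have hHsum' := (mem_filter.1 hH').2
          obtain rfl : u = u' := by rw [hN] at hsum; omega
          have := insert_erase_insert_erase hu (mem_sdiff.1 hv).2
          rw [hN, insert_erase_insert_erase hu' (mem_sdiff.1 hv').2] at this
          rw [this]
    _ = ∑ N ∈ lowNondivisors A n, (halvingSwaps A N).card := card_sigma _ _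
    _ ≤ ∑ _N ∈ lowNondivisors A n, (n - 1) :=
        sum_le_sum fun N hN =>
          Nat.le_sub_one_of_lt (card_halvingSwaps_lt hn hA (mem_filter.1 hN).1)
    _ = (n - 1) * (lowNondivisors A n).card := by rw [sum_const, smul_eq_mul, mul_comm]

lemma le_card_goodSwaps_add_compl (hn : 3 ≤ n) (hA : A.card = 2 * n) (hH : H ∈ halfSets A n) :
    n ≤ (goodSwaps (H.sum id) H (A \ H)).card
      + (goodSwaps ((A \ H).sum id) (A \ H) (A \ (A \ H))).card := by
  obtain ⟨hHn, hHsum⟩ := mem_filter.1 hH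
  obtain ⟨hHA, hHcard⟩ := mem_powersetCard.1 hHn
  have hcompl : (A \ H).sum id = H.sum id := by have := sum_id_sdiff_add hHA; omega
  have hcard : (A \ H).card = n := by rw [card_sdiff_of_subset hHA, hA, hHcard]; omega
  rw [hcompl, Finset.sdiff_sdiff_eq_self hHA]
  exact (le_card_filter_isGoodPair hn hHcard hcard disjoint_sdiff rfl hcompl).trans
    (card_filter_isGoodPair_le disjoint_sdiff)

lemma mul_card_halfSets_le (hn : 3 ≤ n) (hA : A.card = 2 * n) :
    n * (halfSets A n).card
      ≤ 2 * ∑ H ∈ halfSets A n, (goodSwaps (H.sum id) H (A \ H)).card := by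
  set f := fun H : Finset ℕ => (goodSwaps (H.sum id) H (A \ H)).card
  have hinv : ∀ H ∈ halfSets A n, A \ (A \ H) = H := fun _ hH =>
    Finset.sdiff_sdiff_eq_self (mem_powersetCard.1 (mem_filter.1 hH).1).1
  have hcompl : ∑ H ∈ halfSets A n, f H = ∑ H ∈ halfSets A n, f (A \ H) :=
    sum_nbij' (A \ ·) (A \ ·) (fun _ hH => sdiff_mem_halfSets hA hH)
      (fun _ hH => sdiff_mem_halfSets hA hH) hinv hinv (fun H hH => by rw [hinv H hH])
  calc n * (halfSets A n).card = ∑ _H ∈ halfSets A n, n := by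
        rw [sum_const, smul_eq_mul, mul_comm]
    _ ≤ ∑ H ∈ halfSets A n, (f H + f (A \ H)) :=
        sum_le_sum fun _ hH => le_card_goodSwaps_add_compl hn hA hH
    _ = 2 * ∑ H ∈ halfSets A n, f H := by rw [sum_add_distrib, ← hcompl, two_mul]

lemma halfSets_eq_empty (hn : 3 ≤ n) (hA : A.card = 2 * n)
    (hhalf : (halfSets A n).card = 2 * (lowNondivisors A n).card) : halfSets A n = ∅ := by
  have hlower := mul_card_halfSets_le hn hA
  have hupper := sum_card_goodSwaps_le hn hA
  obtain ⟨m, rfl⟩ : ∃ m, n = m + 1 := ⟨n - 1, by omega⟩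
  rw [Nat.add_sub_cancel] at hupper
  rw [← card_eq_zero]
  nlinarith

end DoubleCounting

section Gap

variable {A B C : Finset ℕ} {n M : ℕ}

lemma dvd_of_lowNondivisors_eq_empty (hlow : lowNondivisors A n = ∅)
    (hC : C ∈ A.powersetCard n) (hCS : 2 * C.sum id < A.sum id) : C.sum id ∣ A.sum id := by
  by_contra hdvd
  have : C ∈ lowNondivisors A n := mem_filter.2 ⟨mem_filter.2 ⟨hC, hCS⟩, hdvd⟩
  simp [hlow] at this

lemma three_mul_sum_le_or_le (hA : A.card = 2 * n) (hhalf : halfSets A n = ∅)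
    (hlow : lowNondivisors A n = ∅) (hC : C ∈ A.powersetCard n) :
    3 * C.sum id ≤ A.sum id ∨ 2 * A.sum id ≤ 3 * C.sum id := by
  have hsum := sum_id_sdiff_add (mem_powersetCard.1 hC).1
  rcases lt_trichotomy (2 * C.sum id) (A.sum id) with h | h | h
  · exact Or.inl (succ_mul_le_of_dvd (dvd_of_lowNondivisors_eq_empty hlow hC h) h)
  · have : C ∈ halfSets A n := mem_filter.2 ⟨hC, h⟩
    simp [hhalf] at this
  · have hcompl : 2 * (A \ C).sum id < A.sum id := by omega
    have := succ_mul_le_of_dvd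
      (dvd_of_lowNondivisors_eq_empty hlow (sdiff_mem_powersetCard hA hC) hcompl) hcompl
    omega

lemma three_mul_sum_le_of_exchange (hpos : ∀ a ∈ A, 0 < a) (hmax : ∀ x ∈ A, x ≤ M)
    (hgap : ∀ C ∈ A.powersetCard n, 3 * C.sum id ≤ A.sum id ∨ 2 * A.sum id ≤ 3 * C.sum id)
    (hB : B ∈ A.powersetCard n) (hMB : M ∈ B) (hBS : 3 * B.sum id ≤ A.sum id)
    (hC : C ∈ A.powersetCard n) : 3 * C.sum id ≤ A.sum id := by
  obtain ⟨hBA, hBcard⟩ := mem_powersetCard.1 hB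
  have hM : M ≤ B.sum id := single_le_sum (f := id) (fun _ _ => Nat.zero_le _) hMB
  induction hk : (C \ B).card generalizing C with
  | zero =>
    obtain ⟨hCA, hCcard⟩ := mem_powersetCard.1 hC
    rw [card_eq_zero, sdiff_eq_empty_iff_subset] at hk
    rwa [eq_of_subset_of_card_le hk (by omega)]
  | succ k ih =>
    obtain ⟨hCA, hCcard⟩ := mem_powersetCard.1 hC
    obtain ⟨c, hc⟩ : (C \ B).Nonempty := card_pos.1 (by omega)
    obtain ⟨b, hb⟩ : (B \ C).Nonempty := card_pos.1 (by rw [card_sdiff_comm (by omega)]; omega)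
    obtain ⟨hcC, hcB⟩ := mem_sdiff.1 hc
    obtain ⟨hbB, hbC⟩ := mem_sdiff.1 hb
    have hn : 0 < n := hCcard ▸ card_pos.2 ⟨c, hcC⟩
    have hC' : insert b (C.erase c) ∈ A.powersetCard n := by
      rw [mem_powersetCard, card_insert_of_notMem fun h => hbC (mem_of_mem_erase h),
        card_erase_of_mem hcC, hCcard]
      exact ⟨insert_subset (hBA hbB) ((erase_subset _ _).trans hCA), by omega⟩
    have hk' : (insert b (C.erase c) \ B).card = k := by
      rw [insert_sdiff_of_mem _ hbB, erase_sdiff_comm, card_erase_of_mem hc]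
      omega
    have hsum := sum_insert_erase_add hcC hbC
    have := ih hC' hk'
    have := hgap C hC
    have := hmax c (hCA hcC)
    have := hpos b (hBA hbB)
    omega

lemma two_mul_sum_gt_of_max_mem (hA : A.card = 2 * n) (hpos : ∀ a ∈ A, 0 < a)
    (hmax : ∀ x ∈ A, x ≤ M) (hhalf : halfSets A n = ∅) (hlow : lowNondivisors A n = ∅)
    (hB : B ∈ A.powersetCard n) (hMB : M ∈ B) : A.sum id < 2 * B.sum id := by
  by_contra! hle
  have hlt : 2 * B.sum id < A.sum id := by
    refine lt_of_le_of_ne hle fun h => ?_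
    have : B ∈ halfSets A n := mem_filter.2 ⟨hB, h⟩
    simp [hhalf] at this
  have hBS := succ_mul_le_of_dvd (dvd_of_lowNondivisors_eq_empty hlow hB hlt) hlt
  have hcompl := three_mul_sum_le_of_exchange hpos hmax
    (fun C hC => three_mul_sum_le_or_le hA hhalf hlow hC) hB hMB hBS
    (sdiff_mem_powersetCard hA hB)
  have hsum := sum_id_sdiff_add (mem_powersetCard.1 hB).1
  have hMpos := hpos M ((mem_powersetCard.1 hB).1 hMB)
  have hM : M ≤ B.sum id := single_le_sum (f := id) (fun _ _ => Nat.zero_le _) hMB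
  omega

end Gap

/-- For `n ≥ 3`, if a set `A` of `2n` positive integers has exactly `(1/2) * (2n).choose n`
divisors of size `n`, then `A` is an `n`-anti-pencil. -/
theorem stmt_16 (n : ℕ) (hn : 3 ≤ n) (A : Finset ℕ) (hcard : A.card = 2 * n)
    (hpos : ∀ a ∈ A, 0 < a)
    (hnum : 2 * (A.powerset.filter (fun B => B.card = n ∧ B.sum id ∣ A.sum id)).card
      = (2 * n).choose n) :
    IsKAntiPencil n A := by
  rw [← filter_filter, ← powersetCard_eq_filter] at hnum
  have hcount := card_halfSets_eq_two_mul_card_lowNondivisors hcard (by omega) hpos hnum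
  have hhalf := halfSets_eq_empty hn hcard hcount
  have hlow : lowNondivisors A n = ∅ := by
    rw [hhalf, card_empty] at hcount
    exact card_eq_zero.1 (by omega)
  have hAne : A.Nonempty := card_pos.1 (by omega)
  have hmax : ∀ x ∈ A, x ≤ A.max' hAne := fun x hx => le_max' A x hx
  have hhigh : ∀ B ∈ A.powersetCard n, A.max' hAne ∈ B → A.sum id < 2 * B.sum id :=
    fun B hB => two_mul_sum_gt_of_max_mem hcard hpos hmax hhalf hlow hB
  refine ⟨A.max' hAne, max'_mem A hAne, hmax, fun B => ⟨?_, ?_⟩⟩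
  · rintro ⟨hBA, hBcard, hdvd⟩
    have hB := mem_powersetCard.2 ⟨hBA, hBcard⟩
    refine ⟨subset_erase.2 ⟨hBA, fun hMB => ?_⟩, hBcard⟩
    have := two_mul_sum_le_of_dvd hcard (by omega) hpos hB hdvd
    have := hhigh B hB hMB
    omega
  · rintro ⟨hBA, hBcard⟩
    obtain ⟨hBA, hMB⟩ := subset_erase.1 hBA
    have hB := mem_powersetCard.2 ⟨hBA, hBcard⟩
    have hcompl :=
      hhigh _ (sdiff_mem_powersetCard hcard hB) (mem_sdiff.2 ⟨max'_mem A hAne, hMB⟩)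
    have hsum := sum_id_sdiff_add hBA
    exact ⟨hBA, hBcard, dvd_of_lowNondivisors_eq_empty hlow hB (by omega)⟩
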